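/- Let D ≥ 2 and let W_1, …, W_D be mutually independent random variables taking values in finite sets, and let S be any random variable taking values in a finite set, all on a common probability space. Then for every d_1 ∈ {1,…,D}, the sum over d_2 = 1,…,D of the conditional mutual informations I(W_{d_2}; S | W_{d_1}) is at most H(S). -/

import Mathlib

open scoped BigOperators

namespace InfoTheory

/-- The distribution of a random variable `X` on a finite sample space with
probability mass function `P`. -/
noncomputable def dist {Ω A : Type*} [Fintype Ω] [DecidableEq A]
    (P : Ω → ℝ) (X : Ω → A) (a : A) : ℝ :=
  ∑ ω, if X ω = a then P ω else 0

/-- Shannon entropy `H(X) = -Σ_x P(X=x) log P(X=x)` of a finite-valued random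
variable on a finite sample space with probability mass function `P`. -/
noncomputable def entropy {Ω A : Type*} [Fintype Ω] [Fintype A] [DecidableEq A]
    (P : Ω → ℝ) (X : Ω → A) : ℝ :=
  -∑ a : A, dist P X a * Real.log (dist P X a)

/-- Mutual information `I(X;Y) = H(X) + H(Y) - H(X,Y)`. -/
noncomputable def mutInfo {Ω A B : Type*} [Fintype Ω] [Fintype A] [Fintype B]
    [DecidableEq A] [DecidableEq B] (P : Ω → ℝ) (X : Ω → A) (Y : Ω → B) : ℝ :=
  entropy P X + entropy P Y - entropy P (fun ω => (X ω, Y ω))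

/-- Conditional mutual information
`I(X;Y|Z) = H(X,Z) + H(Y,Z) - H(X,Y,Z) - H(Z)`. -/
noncomputable def condMutInfo {Ω A B C : Type*} [Fintype Ω] [Fintype A] [Fintype B]
    [Fintype C] [DecidableEq A] [DecidableEq B] [DecidableEq C]
    (P : Ω → ℝ) (X : Ω → A) (Y : Ω → B) (Z : Ω → C) : ℝ :=
  entropy P (fun ω => (X ω, Z ω)) + entropy P (fun ω => (Y ω, Z ω))
    - entropy P (fun ω => (X ω, Y ω, Z ω)) - entropy P Z

end InfoTheory

/-!
The summand `d₂ = d₁` vanishes, and for `j ≠ d₁` the independence of `W_j` and `W_{d₁}` turns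
`I(W_j; S | W_{d₁})` into `I(W_j; (S, W_{d₁}))`. So `∑_{j ≠ d₁} I(W_j; S | W_{d₁}) - H(S)` is
`E[log F]` with `F = p(S) ∏_{j ≠ d₁} p(W_j, S, W_{d₁}) / (p(W_j) p(S, W_{d₁}))`, and by
`log x ≤ x - 1` it suffices that `E[F] ≤ 1`. To see this, bound the joint law of `(W, S)` by the
product law of `W`; then summing out each `W_j`, `j ≠ d₁`, against its conditional law given
`(S, W_{d₁})` contributes a factor at most `1`, and what is left is `∑ p(s) p(w_{d₁}) = 1`.
-/

theorem Fintype.sum_pi_mul_prod_subtype_ne {ι R : Type*} [Fintype ι] [DecidableEq ι]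
    {A : ι → Type*} [∀ i, Fintype (A i)] [CommSemiring R] (k : ι) (g : A k → R)
    (f : ∀ j : {j // j ≠ k}, A k → A j → R) :
    ∑ w : ∀ i, A i, g (w k) * ∏ j : {j // j ≠ k}, f j (w k) (w j)
      = ∑ z, g z * ∏ j : {j // j ≠ k}, ∑ a, f j z a := by
  rw [← (Equiv.piSplitAt k A).symm.sum_comp, Fintype.sum_prod_type]
  refine Finset.sum_congr rfl fun z _ => ?_
  have hne : ∀ j : {j // j ≠ k}, (j : ι) = k ↔ False := fun j => iff_false_intro j.2
  simp [hne, Fintype.prod_sum, Finset.mul_sum]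

namespace InfoTheory

open Finset Real

variable {Ω : Type*} [Fintype Ω]

section Distribution

variable (P : Ω → ℝ) {A B : Type*} [DecidableEq A] [DecidableEq B]

theorem sum_dist_mul [Fintype A] (X : Ω → A) (g : A → ℝ) :
    ∑ a, dist P X a * g a = ∑ ω, P ω * g (X ω) := by
  simp only [dist, sum_mul, ite_mul, zero_mul]
  rw [sum_comm]
  simp

theorem dist_eq_sum_mul_ite (X : Ω → A) (a : A) :
    dist P X a = ∑ ω, P ω * if X ω = a then 1 else 0 := by
  simp [dist]

theorem sum_dist [Fintype A] (X : Ω → A) : ∑ a, dist P X a = ∑ ω, P ω := by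
  simpa using sum_dist_mul P X 1

variable {P}

theorem dist_nonneg (hP0 : ∀ ω, 0 ≤ P ω) (X : Ω → A) (a : A) : 0 ≤ dist P X a :=
  sum_nonneg fun ω _ => by split_ifs <;> simp [hP0 ω]

theorem le_dist_apply (hP0 : ∀ ω, 0 ≤ P ω) (X : Ω → A) (ω : Ω) : P ω ≤ dist P X (X ω) := by
  simpa [dist] using single_le_sum (fun ω' _ => by split_ifs <;> simp [hP0 ω'])
    (mem_univ ω) (f := fun ω' => if X ω' = X ω then P ω' else 0)

theorem dist_apply_pos (hP0 : ∀ ω, 0 ≤ P ω) (X : Ω → A) {ω : Ω} (hω : 0 < P ω) :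
    0 < dist P X (X ω) :=
  hω.trans_le (le_dist_apply hP0 X ω)

theorem dist_pair_le_left (hP0 : ∀ ω, 0 ≤ P ω) (X : Ω → A) (Y : Ω → B) (a : A) (b : B) :
    dist P (fun ω => (X ω, Y ω)) (a, b) ≤ dist P X a :=
  sum_le_sum fun ω _ => by
    by_cases hX : X ω = a <;> by_cases hY : Y ω = b <;> simp [hX, hY, hP0 ω]

theorem sum_dist_pair_left [Fintype A] (X : Ω → A) (Y : Ω → B) (b : B) :
    ∑ a, dist P (fun ω => (X ω, Y ω)) (a, b) = dist P Y b := by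
  simp only [dist, Prod.mk.injEq]
  rw [sum_comm]
  refine sum_congr rfl fun ω _ => ?_
  by_cases h : Y ω = b <;> simp [h]

theorem dist_congr {X : Ω → A} {Y : Ω → B} {a : A} {b : B} (h : ∀ ω, X ω = a ↔ Y ω = b) :
    dist P X a = dist P Y b :=
  sum_congr rfl fun ω _ => if_congr (h ω) rfl rfl

noncomputable def likelihoodRatio (P : Ω → ℝ) (X : Ω → A) (Y : Ω → B) (a : A) (b : B) : ℝ :=
  dist P (fun ω => (X ω, Y ω)) (a, b) / (dist P X a * dist P Y b)

theorem likelihoodRatio_nonneg (hP0 : ∀ ω, 0 ≤ P ω) (X : Ω → A) (Y : Ω → B) (a : A) (b : B) :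
    0 ≤ likelihoodRatio P X Y a b :=
  div_nonneg (dist_nonneg hP0 _ _) (mul_nonneg (dist_nonneg hP0 X a) (dist_nonneg hP0 Y b))

theorem likelihoodRatio_pos (hP0 : ∀ ω, 0 ≤ P ω) (X : Ω → A) (Y : Ω → B) {ω : Ω}
    (hω : 0 < P ω) : 0 < likelihoodRatio P X Y (X ω) (Y ω) :=
  div_pos (dist_apply_pos hP0 (fun ω => (X ω, Y ω)) hω)
    (mul_pos (dist_apply_pos hP0 X hω) (dist_apply_pos hP0 Y hω))

end Distribution

section Entropy

variable {P : Ω → ℝ} {A B C : Type*} [Fintype A] [Fintype B] [DecidableEq A] [DecidableEq B]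

theorem entropy_eq_sum (X : Ω → A) : entropy P X = -∑ ω, P ω * log (dist P X (X ω)) := by
  rw [entropy, sum_dist_mul]

theorem entropy_congr {X : Ω → A} {Y : Ω → B} (h : ∀ ω ω', X ω = X ω' ↔ Y ω = Y ω') :
    entropy P X = entropy P Y := by
  simp only [entropy_eq_sum, dist_congr fun ω' => h ω' _]

theorem condMutInfo_self_left (Y : Ω → A) (Z : Ω → B) : condMutInfo P Z Y Z = 0 := by
  have hZZ : entropy P (fun ω => (Z ω, Z ω)) = entropy P Z := entropy_congr (by simp)
  have hZYZ : entropy P (fun ω => (Z ω, Y ω, Z ω)) = entropy P (fun ω => (Y ω, Z ω)) :=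
    entropy_congr fun ω ω' => by simp only [Prod.mk.injEq]; tauto
  rw [condMutInfo, hZZ, hZYZ]
  ring

theorem entropy_pair_eq_add (hP0 : ∀ ω, 0 ≤ P ω) {X : Ω → A} {Y : Ω → B}
    (hXY : ∀ a b, dist P (fun ω => (X ω, Y ω)) (a, b) = dist P X a * dist P Y b) :
    entropy P (fun ω => (X ω, Y ω)) = entropy P X + entropy P Y := by
  simp only [entropy_eq_sum, hXY, ← neg_add, ← sum_add_distrib, ← mul_add]
  congr 1
  refine sum_congr rfl fun ω _ => ?_
  rcases (hP0 ω).eq_or_lt with h | h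
  · simp [← h]
  · rw [log_mul (dist_apply_pos hP0 X h).ne' (dist_apply_pos hP0 Y h).ne']

theorem mutInfo_eq_sum (hP0 : ∀ ω, 0 ≤ P ω) (X : Ω → A) (Y : Ω → B) :
    mutInfo P X Y = ∑ ω, P ω * log (likelihoodRatio P X Y (X ω) (Y ω)) := by
  simp only [mutInfo, entropy_eq_sum, ← sum_sub_distrib, ← sum_add_distrib, ← sum_neg_distrib]
  refine sum_congr rfl fun ω _ => ?_
  rcases (hP0 ω).eq_or_lt with h | h
  · simp [← h]
  · rw [likelihoodRatio, log_div (dist_apply_pos hP0 (fun ω => (X ω, Y ω)) h).ne'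
      (mul_pos (dist_apply_pos hP0 X h) (dist_apply_pos hP0 Y h)).ne',
      log_mul (dist_apply_pos hP0 X h).ne' (dist_apply_pos hP0 Y h).ne']
    ring

theorem condMutInfo_eq_mutInfo [Fintype C] [DecidableEq C] (hP0 : ∀ ω, 0 ≤ P ω)
    {X : Ω → A} (Y : Ω → B) {Z : Ω → C}
    (hXZ : ∀ a c, dist P (fun ω => (X ω, Z ω)) (a, c) = dist P X a * dist P Z c) :
    condMutInfo P X Y Z = mutInfo P X (fun ω => (Y ω, Z ω)) := by
  rw [condMutInfo, mutInfo, entropy_pair_eq_add hP0 hXZ]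
  ring

end Entropy

variable {P : Ω → ℝ}

theorem sum_mul_log_nonpos_of_sum_mul_le_one (hP0 : ∀ ω, 0 ≤ P ω) (hP1 : ∑ ω, P ω = 1)
    {f : Ω → ℝ} (hf : ∀ ω, 0 < P ω → 0 < f ω) (h : ∑ ω, P ω * f ω ≤ 1) :
    ∑ ω, P ω * log (f ω) ≤ 0 :=
  calc ∑ ω, P ω * log (f ω) ≤ ∑ ω, P ω * (f ω - 1) := sum_le_sum fun ω _ => by
        rcases (hP0 ω).eq_or_lt with h0 | hpos
        · simp [← h0]
        · exact mul_le_mul_of_nonneg_left (log_le_sub_one_of_pos (hf ω hpos)) hpos.le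
    _ = ∑ ω, P ω * f ω - 1 := by simp [mul_sub, sum_sub_distrib, hP1]
    _ ≤ 0 := by linarith

theorem sum_mutInfo_sub_entropy_eq (hP0 : ∀ ω, 0 ≤ P ω) {J B C : Type*} [Fintype J]
    {A : J → Type*} [∀ j, Fintype (A j)] [∀ j, DecidableEq (A j)] [Fintype B] [DecidableEq B]
    [Fintype C] [DecidableEq C] (X : ∀ j, Ω → A j) (Y : Ω → C) (Z : Ω → B) :
    ∑ j, mutInfo P (X j) Y - entropy P Z
      = ∑ ω, P ω * log (dist P Z (Z ω) * ∏ j, likelihoodRatio P (X j) Y (X j ω) (Y ω)) := by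
  simp only [mutInfo_eq_sum hP0, entropy_eq_sum]
  rw [sum_comm, sub_neg_eq_add, ← sum_add_distrib]
  refine sum_congr rfl fun ω _ => ?_
  rcases (hP0 ω).eq_or_lt with h | h
  · simp [← h]
  · rw [log_mul (dist_apply_pos hP0 Z h).ne'
      (prod_pos fun j _ => likelihoodRatio_pos hP0 (X j) Y h).ne',
      log_prod fun j _ => (likelihoodRatio_pos hP0 (X j) Y h).ne', mul_add, mul_sum]
    ring

section Independence

variable {ι : Type*} [Fintype ι] {A : ι → Type*} [∀ i, DecidableEq (A i)]

def iIndepFun (P : Ω → ℝ) (W : ∀ i, Ω → A i) : Prop :=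
  ∀ w : ∀ i, A i, dist P (fun ω i => W i ω) w = ∏ i, dist P (W i) (w i)

variable [DecidableEq ι] [∀ i, Fintype (A i)]

theorem iIndepFun.sum_mul_prod {W : ∀ i, Ω → A i} (hW : iIndepFun P W) (f : ∀ i, A i → ℝ) :
    ∑ ω, P ω * ∏ i, f i (W i ω) = ∏ i, ∑ ω, P ω * f i (W i ω) :=
  calc ∑ ω, P ω * ∏ i, f i (W i ω)
      = ∑ w : ∀ i, A i, (∏ i, dist P (W i) (w i)) * ∏ i, f i (w i) := by
        rw [← sum_dist_mul P (fun ω i => W i ω) fun w => ∏ i, f i (w i)]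
        exact Fintype.sum_congr _ _ fun w => by rw [hW w]
    _ = ∏ i, ∑ a, dist P (W i) a * f i a := by simp only [← prod_mul_distrib, Fintype.prod_sum]
    _ = ∏ i, ∑ ω, P ω * f i (W i ω) := prod_congr rfl fun i _ => sum_dist_mul P (W i) (f i)

theorem iIndepFun.dist_pair (hP1 : ∑ ω, P ω = 1) {W : ∀ i, Ω → A i} (hW : iIndepFun P W)
    {i j : ι} (hij : i ≠ j) (a : A i) (b : A j) :
    dist P (fun ω => (W i ω, W j ω)) (a, b) = dist P (W i) a * dist P (W j) b := by
  set e : ∀ l, A l → ℝ := Function.update (Function.update (fun _ _ => 1) i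
    fun x => if x = a then 1 else 0) j fun x => if x = b then 1 else 0
  have he : ∀ l, l ≠ i ∧ l ≠ j → e l = fun _ => 1 := fun l hl => by
    simp [e, Function.update_of_ne hl.1, Function.update_of_ne hl.2]
  have hei : e i = fun x => if x = a then 1 else 0 := by
    simp [e, Function.update_of_ne hij]
  have hej : e j = fun x => if x = b then 1 else 0 := by simp [e]
  calc dist P (fun ω => (W i ω, W j ω)) (a, b) = ∑ ω, P ω * ∏ l, e l (W l ω) := by
        rw [dist_eq_sum_mul_ite]
        refine sum_congr rfl fun ω _ => ?_
        rw [Fintype.prod_eq_mul i j hij fun l hl => by simp [he l hl], hei, hej]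
        by_cases ha : W i ω = a <;> by_cases hb : W j ω = b <;> simp [ha, hb]
    _ = ∏ l, ∑ ω, P ω * e l (W l ω) := hW.sum_mul_prod e
    _ = dist P (W i) a * dist P (W j) b := by
        rw [Fintype.prod_eq_mul i j hij fun l hl => by simp [he l hl, hP1], hei, hej,
          dist_eq_sum_mul_ite, dist_eq_sum_mul_ite]

theorem sum_prod_dist_mul_prod_likelihoodRatio_le_one (hP0 : ∀ ω, 0 ≤ P ω)
    (hP1 : ∑ ω, P ω = 1) {C : Type*} [DecidableEq C] (W : ∀ i, Ω → A i) (Y : Ω → C) (k : ι)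
    (y : A k → C) :
    ∑ w : ∀ i, A i, (∏ i, dist P (W i) (w i)) *
      ∏ j : {j // j ≠ k}, likelihoodRatio P (W j) Y (w j) (y (w k)) ≤ 1 := by
  set cond : ∀ j : {j // j ≠ k}, A k → A j → ℝ := fun j z a =>
    dist P (fun ω => (W j ω, Y ω)) (a, y z) / dist P Y (y z)
  have hcond0 : ∀ j z a, 0 ≤ cond j z a := fun j z a =>
    div_nonneg (dist_nonneg hP0 _ _) (dist_nonneg hP0 _ _)
  have hcond1 : ∀ j z, ∑ a, cond j z a ≤ 1 := fun j z => by
    rw [← sum_div, sum_dist_pair_left]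
    exact div_self_le_one _
  have hratio (j : {j // j ≠ k}) z a :
      dist P (W j) a * likelihoodRatio P (W j) Y a (y z) ≤ cond j z a := by
    rcases (dist_nonneg hP0 (W j) a).eq_or_lt with h | h
    · rw [← h, zero_mul]; exact hcond0 j z a
    · rw [likelihoodRatio, ← mul_div_assoc, mul_div_mul_left _ _ h.ne']
  calc ∑ w : ∀ i, A i, (∏ i, dist P (W i) (w i)) *
        ∏ j : {j // j ≠ k}, likelihoodRatio P (W j) Y (w j) (y (w k))
      = ∑ w : ∀ i, A i, dist P (W k) (w k) *
        ∏ j : {j // j ≠ k}, dist P (W j) (w j) * likelihoodRatio P (W j) Y (w j) (y (w k)) := by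
        simp only [Fintype.prod_eq_mul_prod_subtype_ne _ k, prod_mul_distrib, mul_assoc]
    _ ≤ ∑ w : ∀ i, A i, dist P (W k) (w k) * ∏ j : {j // j ≠ k}, cond j (w k) (w j) := by
        gcongr with w _ j
        · exact dist_nonneg hP0 _ _
        · exact fun j _ => mul_nonneg (dist_nonneg hP0 _ _) (likelihoodRatio_nonneg hP0 _ _ _ _)
        · exact hratio _ _ _
    _ = ∑ z, dist P (W k) z * ∏ j : {j // j ≠ k}, ∑ a, cond j z a :=
        Fintype.sum_pi_mul_prod_subtype_ne k _ cond
    _ ≤ ∑ z, dist P (W k) z := by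
        gcongr with z
        exact mul_le_of_le_one_right (dist_nonneg hP0 _ _)
          (prod_le_one (fun j _ => sum_nonneg fun a _ => hcond0 j z a) fun j _ => hcond1 j z)
    _ = 1 := by rw [sum_dist, hP1]

theorem iIndepFun.sum_mul_dist_mul_prod_likelihoodRatio_le_one (hP0 : ∀ ω, 0 ≤ P ω)
    (hP1 : ∑ ω, P ω = 1) {W : ∀ i, Ω → A i} (hW : iIndepFun P W) {B : Type*} [Fintype B]
    [DecidableEq B] (S : Ω → B) (k : ι) :
    ∑ ω, P ω * (dist P S (S ω) * ∏ j : {j // j ≠ k},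
      likelihoodRatio P (W j) (fun ω => (S ω, W k ω)) (W j ω) (S ω, W k ω)) ≤ 1 := by
  set R : (∀ i, A i) → B → ℝ := fun w s => ∏ j : {j // j ≠ k},
    likelihoodRatio P (W j) (fun ω => (S ω, W k ω)) (w j) (s, w k)
  have hR : ∀ w s, 0 ≤ R w s := fun w s =>
    prod_nonneg fun j _ => likelihoodRatio_nonneg hP0 _ _ _ _
  calc ∑ ω, P ω * (dist P S (S ω) * R (fun i => W i ω) (S ω))
      = ∑ w : ∀ i, A i, ∑ s, dist P (fun ω => (fun i => W i ω, S ω)) (w, s) *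
          (dist P S s * R w s) := by
        rw [← Fintype.sum_prod_type', sum_dist_mul P (fun ω => (fun i => W i ω, S ω))
          fun ws => dist P S ws.2 * R ws.1 ws.2]
    _ ≤ ∑ w : ∀ i, A i, ∑ s, (∏ i, dist P (W i) (w i)) * (dist P S s * R w s) := by
        gcongr with w _ s
        · exact mul_nonneg (dist_nonneg hP0 S s) (hR w s)
        · exact (hW w).symm ▸ dist_pair_le_left hP0 _ S w s
    _ = ∑ s, dist P S s * ∑ w : ∀ i, A i, (∏ i, dist P (W i) (w i)) * R w s := by
        rw [sum_comm]
        simp only [mul_sum, mul_left_comm]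
    _ ≤ ∑ s, dist P S s := by
        gcongr with s
        exact mul_le_of_le_one_right (dist_nonneg hP0 S s)
          (sum_prod_dist_mul_prod_likelihoodRatio_le_one hP0 hP1 W _ k fun z => (s, z))
    _ = 1 := by rw [sum_dist, hP1]

end Independence

end InfoTheory

open InfoTheory in
theorem sum_condMutInfo_le_entropy_general {Ω : Type*} [Fintype Ω] {D : ℕ}
    {A : Fin D → Type*} [∀ i, Fintype (A i)] [∀ i, DecidableEq (A i)]
    {B : Type*} [Fintype B] [DecidableEq B]
    (P : Ω → ℝ) (hP0 : ∀ ω, 0 ≤ P ω) (hP1 : ∑ ω, P ω = 1)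
    (W : ∀ i, Ω → A i) (S : Ω → B)
    (hindep : ∀ w : ∀ i, A i,
      dist P (fun ω => fun i => W i ω) w = ∏ i, dist P (W i) (w i))
    (d1 : Fin D) :
    ∑ d2 : Fin D, condMutInfo P (W d2) S (W d1) ≤ entropy P S := by
  have hW : iIndepFun P W := hindep
  have hcmi (j : {j // j ≠ d1}) :
      condMutInfo P (W j) S (W d1) = mutInfo P (W j) (fun ω => (S ω, W d1 ω)) :=
    condMutInfo_eq_mutInfo hP0 S (hW.dist_pair hP1 j.2)
  rw [Fintype.sum_eq_add_sum_subtype_ne _ d1, condMutInfo_self_left, zero_add,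
    Fintype.sum_congr _ _ hcmi]
  have hgibbs := sum_mul_log_nonpos_of_sum_mul_le_one hP0 hP1
    (fun ω hω => mul_pos (dist_apply_pos hP0 S hω)
      (Finset.prod_pos fun j _ => likelihoodRatio_pos hP0 _ _ hω))
    (hW.sum_mul_dist_mul_prod_likelihoodRatio_le_one hP0 hP1 S d1)
  rw [← sum_mutInfo_sub_entropy_eq hP0] at hgibbs
  linarith

open InfoTheory in
/-- Let `D ≥ 2` and let `W₁, …, W_D` be mutually independent finite-valued random
variables and `S` any finite-valued random variable on a common finite probability
space.  Then for every `d₁`, `Σ_{d₂=1}^{D} I(W_{d₂}; S | W_{d₁}) ≤ H(S)`. -/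
theorem sum_condMutInfo_le_entropy {Ω : Type*} [Fintype Ω] {D : ℕ} (hD : 2 ≤ D)
    {A : Fin D → Type*} [∀ i, Fintype (A i)] [∀ i, DecidableEq (A i)]
    {B : Type*} [Fintype B] [DecidableEq B]
    (P : Ω → ℝ) (hP0 : ∀ ω, 0 ≤ P ω) (hP1 : ∑ ω, P ω = 1)
    (W : ∀ i, Ω → A i) (S : Ω → B)
    (hindep : ∀ w : ∀ i, A i,
      dist P (fun ω => fun i => W i ω) w = ∏ i, dist P (W i) (w i))
    (d1 : Fin D) :
    ∑ d2 : Fin D, condMutInfo P (W d2) S (W d1) ≤ entropy P S :=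
  sum_condMutInfo_le_entropy_general P hP0 hP1 W S hindep d1
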